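/- arXiv:1702.03313 — 5 statements merged into one kernel-verified Lean document; each statement's English description precedes it below -/
import Mathlib

section
/- Let A be an m×n real matrix, μ a fixed real number, C_j the sum of the entries of column j, D_j = max(C_j - μ, 0), and D = ∑_j D_j. If D_j ≥ D_k but a_{ij} ≤ a_{ik} for some row i, then interchanging the entries a_{ij} and a_{ik} does not decrease D. -/
/-!
The swap moves `d = a_{ik} - a_{ij} ≥ 0` from column `k` to column `j` and leaves every other
column sum unchanged, so only the two terms `x⁺ + y⁺` (with `x⁺ = max x 0`, `y⁺ ≤ x⁺`) change, into
`(x + d)⁺ + (y - d)⁺`. If `x ≤ 0` the old value is `0`; if `x > 0` the inequality reduces to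
`y⁺ ≤ max y d = (y - d)⁺ + d`.
-/

open Finset

theorem max_add_max_le_max_add_max {α : Type*} [AddCommGroup α] [LinearOrder α]
    [IsOrderedAddMonoid α] {x y d : α} (hd : 0 ≤ d) (h : max y 0 ≤ max x 0) :
    max x 0 + max y 0 ≤ max (x + d) 0 + max (y - d) 0 := by
  rcases le_or_gt x 0 with hx | hx
  · have hy : max y 0 = 0 := le_antisymm (h.trans_eq (max_eq_right hx)) (le_max_right y 0)
    rw [max_eq_right hx, hy, zero_add]
    exact add_nonneg (le_max_right _ _) (le_max_right _ _)
  · have hxd : 0 < x + d := add_pos_of_pos_of_nonneg hx hd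
    rw [max_eq_left hx.le, max_eq_left hxd.le, add_assoc, add_le_add_iff_left, add_comm,
      ← max_add_add_right, sub_add_cancel, zero_add]
    exact max_le_max le_rfl hd

theorem Fintype.sum_ite_eq_add_sub {ι M : Type*} [Fintype ι] [DecidableEq ι] [AddCommGroup M]
    (f : ι → M) (i : ι) (b : M) :
    ∑ l, (if l = i then b else f l) = ∑ l, f l + (b - f i) := by
  have hsplit : ∀ l, (if l = i then b else f l) = f l + if l = i then b - f i else 0 := by
    intro l
    split_ifs with hl
    · rw [hl, add_sub_cancel]
    · rw [add_zero]
  simp only [hsplit, sum_add_distrib, Fintype.sum_ite_eq']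

theorem Fintype.sum_le_sum_of_eq_off_pair {ι M : Type*} [Fintype ι] [AddCommGroup M]
    [PartialOrder M] [IsOrderedAddMonoid M] {f g : ι → M} {j k : ι} (hjk : j ≠ k)
    (hoff : ∀ c, c ≠ j → c ≠ k → f c = g c) (hpair : f j + f k ≤ g j + g k) :
    ∑ c, f c ≤ ∑ c, g c := by
  rw [← sub_nonneg, ← sum_sub_distrib,
    Fintype.sum_eq_add j k hjk fun c hc => sub_eq_zero.mpr (hoff c hc.1 hc.2).symm]
  rw [← sub_nonneg] at hpair
  exact hpair.trans_eq (by abel)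

section swapEntries

variable {ι κ α : Type*} [DecidableEq ι] [DecidableEq κ]

def swapEntries (A : ι → κ → α) (i : ι) (j k : κ) : ι → κ → α :=
  fun l c => if l = i ∧ c = j then A i k else if l = i ∧ c = k then A i j else A l c

variable (A : ι → κ → α) (i : ι) (j k : κ)

theorem swapEntries_self : swapEntries A i j j = A := by
  funext l c
  by_cases h : l = i ∧ c = j
  · obtain ⟨rfl, rfl⟩ := h
    simp only [swapEntries, and_self, if_true]
  · simp only [swapEntries, if_neg h]

theorem swapEntries_apply_left (l : ι) :
    swapEntries A i j k l j = if l = i then A i k else A l j := by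
  by_cases hl : l = i <;> simp [swapEntries, hl]

theorem swapEntries_apply_right (hjk : j ≠ k) (l : ι) :
    swapEntries A i j k l k = if l = i then A i j else A l k := by
  by_cases hl : l = i <;> simp [swapEntries, hl, hjk.symm]

variable [Fintype ι] [AddCommGroup α]

theorem sum_swapEntries_of_ne {c : κ} (hcj : c ≠ j) (hck : c ≠ k) :
    ∑ l, swapEntries A i j k l c = ∑ l, A l c := by
  simp only [swapEntries, hcj, hck, and_false, if_false]

theorem sum_swapEntries_left : ∑ l, swapEntries A i j k l j = ∑ l, A l j + (A i k - A i j) := by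
  simp only [swapEntries_apply_left]
  exact Fintype.sum_ite_eq_add_sub (fun l => A l j) i (A i k)

theorem sum_swapEntries_right (hjk : j ≠ k) :
    ∑ l, swapEntries A i j k l k = ∑ l, A l k - (A i k - A i j) := by
  simp only [swapEntries_apply_right A i j k hjk]
  rw [Fintype.sum_ite_eq_add_sub (fun l => A l k) i (A i j)]
  abel

end swapEntries

theorem stmt_1 {m n : ℕ} (A : Fin m → Fin n → ℝ) (μ : ℝ) (i : Fin m) (j k : Fin n)
    (hD : max ((∑ l, A l j) - μ) 0 ≥ max ((∑ l, A l k) - μ) 0)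
    (ha : A i j ≤ A i k)
    (A' : Fin m → Fin n → ℝ)
    (hA' : A' = fun l c => if l = i ∧ c = j then A i k
                           else if l = i ∧ c = k then A i j
                           else A l c) :
    ∑ c, max ((∑ l, A' l c) - μ) 0 ≥ ∑ c, max ((∑ l, A l c) - μ) 0 := by
  obtain rfl : A' = swapEntries A i j k := hA'
  rcases eq_or_ne j k with rfl | hjk
  · rw [swapEntries_self]
  refine Fintype.sum_le_sum_of_eq_off_pair hjk
    (fun c hcj hck => by rw [sum_swapEntries_of_ne A i j k hcj hck]) ?_
  rw [sum_swapEntries_left, sum_swapEntries_right A i j k hjk, add_sub_right_comm,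
    sub_right_comm _ (A i k - A i j)]
  exact max_add_max_le_max_add_max (sub_nonneg.mpr ha) hD
end

section
/- For 0 ≤ r < 1, the normalized L¹ norm of P_r - 1 over the unit circle equals 2 - (4/π)·arccos(r); that is, (1/2π)∫_{-π}^{π} |P_r(θ) - 1| dθ = 2 - (4/π)·arccos r. -/
/-!
`P_r(θ) - 1 = 2r(cos θ - r) / (1 - 2r cos θ + r²)` is nonnegative exactly where
`|θ| ≤ arccos r`, and it has a primitive on the whole line,
`2 arctan (r sin θ / (1 - r cos θ)) = -2 Im log (1 - r e^{iθ})`, which is odd, vanishes at `±π`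
and equals `2 arcsin r` at `arccos r`. Splitting `[-π, π]` at `±arccos r` therefore gives
`∫ |P_r - 1| = 8 arcsin r = 4π - 8 arccos r`.
-/

open Real Set intervalIntegral

theorem integral_abs_eq_of_hasDerivAt {g Ψ : ℝ → ℝ} {a b c d : ℝ}
    (hab : a ≤ b) (hbc : b ≤ c) (hcd : c ≤ d) (hΨ : ∀ x, HasDerivAt Ψ (g x) x)
    (hg : Continuous g) (hleft : ∀ x ∈ Icc a b, g x ≤ 0) (hmid : ∀ x ∈ Icc b c, 0 ≤ g x)
    (hright : ∀ x ∈ Icc c d, g x ≤ 0) :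
    ∫ x in a..d, |g x| = 2 * (Ψ c - Ψ b) - (Ψ d - Ψ a) := by
  have hint : ∀ u v, IntervalIntegrable (fun x => |g x|) MeasureTheory.volume u v :=
    fun u v => hg.abs.intervalIntegrable u v
  have hFTC : ∀ u v, ∫ x in u..v, g x = Ψ v - Ψ u := fun u v =>
    integral_eq_sub_of_hasDerivAt (fun x _ => hΨ x) (hg.intervalIntegrable u v)
  have hneg : ∀ {u v}, u ≤ v → (∀ x ∈ Icc u v, g x ≤ 0) → ∫ x in u..v, |g x| = Ψ u - Ψ v :=
    fun huv h => by
      rw [integral_congr (g := fun x => -g x)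
        fun x hx => abs_of_nonpos (h x (uIcc_of_le huv ▸ hx)), integral_neg, hFTC, neg_sub]
  have hpos : ∫ x in b..c, |g x| = Ψ c - Ψ b := by
    rw [integral_congr fun x hx => abs_of_nonneg (hmid x (uIcc_of_le hbc ▸ hx)), hFTC]
  rw [← integral_add_adjacent_intervals (hint a b) (hint b d),
    ← integral_add_adjacent_intervals (hint b c) (hint c d), hneg hab hleft, hpos,
    hneg hcd hright]
  ring

lemma mul_cos_le_abs (r θ : ℝ) : r * cos θ ≤ |r| :=
  (le_abs_self _).trans <| by
    rw [abs_mul]; exact mul_le_of_le_one_right (abs_nonneg r) (abs_cos_le_one θ)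

lemma le_cos_iff_abs_le_arccos {x θ : ℝ} (hx₁ : -1 ≤ x) (hx₂ : x ≤ 1) (hθ : |θ| ≤ π) :
    x ≤ cos θ ↔ |θ| ≤ arccos x := by
  rw [← cos_abs, ← strictAntiOn_cos.le_iff_ge ⟨arccos_nonneg x, arccos_le_pi x⟩
    ⟨abs_nonneg θ, hθ⟩, cos_arccos hx₁ hx₂]

lemma cos_le_iff_arccos_le_abs {x θ : ℝ} (hx₁ : -1 ≤ x) (hx₂ : x ≤ 1) (hθ : |θ| ≤ π) :
    cos θ ≤ x ↔ arccos x ≤ |θ| := by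
  rw [← cos_abs, ← strictAntiOn_cos.le_iff_ge ⟨abs_nonneg θ, hθ⟩
    ⟨arccos_nonneg x, arccos_le_pi x⟩, cos_arccos hx₁ hx₂]

section PoissonKernel

variable {r : ℝ}

lemma poissonKernel_denom_pos (hr : |r| < 1) (θ : ℝ) : 0 < 1 - 2 * r * cos θ + r ^ 2 := by
  nlinarith [mul_cos_le_abs r θ, sq_abs r, mul_pos (sub_pos.2 hr) (sub_pos.2 hr)]

lemma one_sub_mul_cos_pos (hr : |r| < 1) (θ : ℝ) : 0 < 1 - r * cos θ := by
  linarith [mul_cos_le_abs r θ]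

lemma poissonKernel_sub_one (hr : |r| < 1) (θ : ℝ) :
    (1 - r ^ 2) / (1 - 2 * r * cos θ + r ^ 2) - 1 =
      2 * r * (cos θ - r) / (1 - 2 * r * cos θ + r ^ 2) := by
  rw [div_sub_one (poissonKernel_denom_pos hr θ).ne']
  ring

lemma hasDerivAt_poissonKernel_primitive (hr : |r| < 1) (θ : ℝ) :
    HasDerivAt (fun t => 2 * arctan (r * sin t / (1 - r * cos t)))
      ((1 - r ^ 2) / (1 - 2 * r * cos θ + r ^ 2) - 1) θ := by
  have hq := one_sub_mul_cos_pos hr θ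
  have hD := poissonKernel_denom_pos hr θ
  have hquot : HasDerivAt (fun t => r * sin t / (1 - r * cos t))
      ((r * cos θ * (1 - r * cos θ) - r * sin θ * (r * sin θ)) / (1 - r * cos θ) ^ 2) θ := by
    refine (((hasDerivAt_sin θ).const_mul r).div
      (((hasDerivAt_cos θ).const_mul r).const_sub 1) hq.ne').congr_deriv ?_
    ring
  refine (hquot.arctan.const_mul 2).congr_deriv ?_
  rw [poissonKernel_sub_one hr]
  have hpyth := sin_sq_add_cos_sq θ
  field_simp
  linear_combination (-r ^ 2 * (1 - 2 * r * cos θ + r ^ 2) - r ^ 3 * (cos θ - r)) * hpyth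

lemma poissonKernel_primitive_arccos (hr : |r| < 1) :
    2 * arctan (r * sin (arccos r) / (1 - r * cos (arccos r))) = 2 * arcsin r := by
  have hr' := abs_lt.1 hr
  have hs : 0 < √(1 - r ^ 2) := sqrt_pos.2 (by nlinarith)
  have hsq : 1 - r * r = √(1 - r ^ 2) ^ 2 := by rw [sq_sqrt (by nlinarith)]; ring
  rw [cos_arccos (by linarith) (by linarith), sin_arccos, arcsin_eq_arctan ⟨hr'.1, hr'.2⟩, hsq]
  field_simp

lemma poissonKernel_sub_one_nonneg {θ : ℝ} (hr0 : 0 ≤ r) (hr : |r| < 1)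
    (hθ : |θ| ≤ arccos r) : 0 ≤ (1 - r ^ 2) / (1 - 2 * r * cos θ + r ^ 2) - 1 := by
  have hcos : 0 ≤ cos θ - r := sub_nonneg.2 <| (le_cos_iff_abs_le_arccos
    (abs_le.1 hr.le).1 (abs_le.1 hr.le).2 (hθ.trans (arccos_le_pi r))).2 hθ
  rw [poissonKernel_sub_one hr]
  exact div_nonneg (by positivity) (poissonKernel_denom_pos hr θ).le

lemma poissonKernel_sub_one_nonpos {θ : ℝ} (hr0 : 0 ≤ r) (hr : |r| < 1)
    (hθ₁ : arccos r ≤ |θ|) (hθ₂ : |θ| ≤ π) :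
    (1 - r ^ 2) / (1 - 2 * r * cos θ + r ^ 2) - 1 ≤ 0 := by
  have hcos : cos θ - r ≤ 0 := sub_nonpos.2 <|
    (cos_le_iff_arccos_le_abs (abs_le.1 hr.le).1 (abs_le.1 hr.le).2 hθ₂).2 hθ₁
  rw [poissonKernel_sub_one hr]
  exact div_nonpos_of_nonpos_of_nonneg (mul_nonpos_of_nonneg_of_nonpos (by positivity) hcos)
    (poissonKernel_denom_pos hr θ).le

end PoissonKernel

theorem stmt_2 (r : ℝ) (hr0 : 0 ≤ r) (hr1 : r < 1) :
    (1 / (2 * Real.pi)) *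
      ∫ θ in (-Real.pi)..Real.pi,
        |(1 - r ^ 2) / (1 - 2 * r * Real.cos θ + r ^ 2) - 1| =
    2 - (4 / Real.pi) * Real.arccos r := by
  have hr : |r| < 1 := abs_lt.2 ⟨by linarith, hr1⟩
  have ha0 := arccos_nonneg r
  have haπ := arccos_le_pi r
  have hcont : Continuous fun θ => (1 - r ^ 2) / (1 - 2 * r * cos θ + r ^ 2) - 1 :=
    (continuous_const.div (by fun_prop) fun θ => (poissonKernel_denom_pos hr θ).ne').sub
      continuous_const
  rw [integral_abs_eq_of_hasDerivAt (b := -arccos r) (c := arccos r) (by linarith)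
    (by linarith) haπ (hasDerivAt_poissonKernel_primitive hr) hcont
    (fun θ hθ => poissonKernel_sub_one_nonpos hr0 hr (le_abs.2 (.inr (by linarith [hθ.2])))
      (abs_le.2 ⟨hθ.1, by linarith [hθ.2]⟩))
    (fun θ hθ => poissonKernel_sub_one_nonneg hr0 hr (abs_le.2 hθ))
    (fun θ hθ => poissonKernel_sub_one_nonpos hr0 hr (le_abs.2 (.inl hθ.1))
      (abs_le.2 ⟨by linarith [hθ.1], hθ.2⟩))]
  simp only [sin_neg, cos_neg, sin_pi, cos_pi, mul_neg, neg_div, arctan_neg, mul_zero, zero_div,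
    arctan_zero, poissonKernel_primitive_arccos hr, arcsin_eq_pi_div_two_sub_arccos]
  field_simp
  ring
end

section
/- For 0 ≤ r < 1, (1/2π)∫_{-arccos r}^{arccos r} P_r(θ) dθ = 1 - arccos(r)/π. -/
/-!
On `(-π, π)` the Poisson kernel `P_r` has the antiderivative `2 arctan ((1 + r)/(1 - r) · tan (θ/2))`.
At `θ = arccos r` one has `tan² (θ/2) = (1 - r)/(1 + r)`, so the argument of `arctan` is
`cot (θ/2) = tan (π/2 - θ/2)`; hence the integral over `[-arccos r, arccos r]` is `2π - 2 arccos r`.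
-/

open Real

noncomputable def discPoissonKernel (r θ : ℝ) : ℝ :=
  (1 - r ^ 2) / (1 - 2 * r * cos θ + r ^ 2)

lemma one_sub_two_mul_cos_add_sq_eq (r θ : ℝ) :
    1 - 2 * r * cos θ + r ^ 2
      = (1 - r) ^ 2 * cos (θ / 2) ^ 2 + (1 + r) ^ 2 * sin (θ / 2) ^ 2 := by
  have h := sin_sq_add_cos_sq (θ / 2)
  rw [show θ = 2 * (θ / 2) by ring, cos_two_mul, show 2 * (θ / 2) / 2 = θ / 2 by ring]
  linear_combination (-(1 + r) ^ 2 : ℝ) * h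

lemma hasDerivAt_two_mul_arctan_mul_tan_half {r θ : ℝ} (hr : r ≠ 1) (hθ : cos (θ / 2) ≠ 0) :
    HasDerivAt (fun θ => 2 * arctan ((1 + r) / (1 - r) * tan (θ / 2)))
      (discPoissonKernel r θ) θ := by
  have htan : HasDerivAt (fun θ => tan (θ / 2)) (1 / cos (θ / 2) ^ 2 * (1 / 2)) θ :=
    HasDerivAt.comp θ (Real.hasDerivAt_tan hθ) ((hasDerivAt_id' θ).div_const 2)
  refine (((htan.const_mul _).arctan).const_mul 2).congr_deriv ?_
  have hr' : 1 - r ≠ 0 := sub_ne_zero.2 hr.symm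
  rw [discPoissonKernel, one_sub_two_mul_cos_add_sq_eq, tan_eq_sin_div_cos]
  field_simp
  ring

lemma one_sub_two_mul_cos_add_sq_pos {r : ℝ} (hr : |r| < 1) (θ : ℝ) :
    0 < 1 - 2 * r * cos θ + r ^ 2 := by
  have h : r * cos θ ≤ |r| := by
    calc r * cos θ ≤ |r * cos θ| := le_abs_self _
      _ ≤ |r| := by rw [abs_mul]; exact mul_le_of_le_one_right (abs_nonneg r) (abs_cos_le_one θ)
  nlinarith [sq_abs r, abs_nonneg r]

lemma continuous_discPoissonKernel {r : ℝ} (hr : |r| < 1) : Continuous (discPoissonKernel r) :=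
  continuous_const.div (by fun_prop) fun θ => (one_sub_two_mul_cos_add_sq_pos hr θ).ne'

lemma integral_discPoissonKernel {r a b : ℝ} (hr : |r| < 1) (ha : a ∈ Set.Ioo (-π) π)
    (hb : b ∈ Set.Ioo (-π) π) :
    ∫ θ in a..b, discPoissonKernel r θ
      = 2 * arctan ((1 + r) / (1 - r) * tan (b / 2))
        - 2 * arctan ((1 + r) / (1 - r) * tan (a / 2)) := by
  refine intervalIntegral.integral_eq_sub_of_hasDerivAt
    (f := fun θ => 2 * arctan ((1 + r) / (1 - r) * tan (θ / 2))) (fun θ hθ => ?_)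
    ((continuous_discPoissonKernel hr).intervalIntegrable a b)
  have hθ' : θ ∈ Set.Ioo (-π) π := Set.ordConnected_Ioo.uIcc_subset ha hb hθ
  refine hasDerivAt_two_mul_arctan_mul_tan_half (abs_lt.1 hr).2.ne ?_
  exact (cos_pos_of_mem_Ioo ⟨by linarith [hθ'.1], by linarith [hθ'.2]⟩).ne'

lemma arctan_mul_tan_half_arccos {r : ℝ} (hr₀ : -1 < r) (hr₁ : r < 1) :
    arctan ((1 + r) / (1 - r) * tan (arccos r / 2)) = π / 2 - arccos r / 2 := by
  set a := arccos r
  have ha₀ : 0 < a := arccos_pos.2 hr₁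
  have haπ : a < π := arccos_lt_pi.2 hr₀
  have hcos : 2 * cos (a / 2) ^ 2 - 1 = r := by
    rw [← cos_two_mul, mul_div_cancel₀ _ two_ne_zero, cos_arccos hr₀.le hr₁.le]
  have htan : (1 + r) / (1 - r) * tan (a / 2) = tan (π / 2 - a / 2) := by
    have hcos' : cos (a / 2) ≠ 0 := (cos_pos_of_mem_Ioo ⟨by linarith, by linarith⟩).ne'
    have hsin' : sin (a / 2) ≠ 0 := (sin_pos_of_pos_of_lt_pi (by linarith) (by linarith)).ne'
    have h1r : 1 - r ≠ 0 := by linarith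
    rw [tan_pi_div_two_sub, tan_eq_sin_div_cos, inv_div]
    field_simp
    linear_combination (-(sin (a / 2) ^ 2 + cos (a / 2) ^ 2)) * hcos
      + 2 * cos (a / 2) ^ 2 * sin_sq_add_cos_sq (a / 2)
  rw [htan, arctan_tan] <;> linarith

theorem stmt_3 (r : ℝ) (hr0 : 0 ≤ r) (hr1 : r < 1) :
    (1 / (2 * Real.pi)) *
      ∫ θ in (-Real.arccos r)..(Real.arccos r),
        (1 - r ^ 2) / (1 - 2 * r * Real.cos θ + r ^ 2) =
    1 - Real.arccos r / Real.pi := by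
  have hr : -1 < r := by linarith
  have ha : arccos r ∈ Set.Ioo (-π) π :=
    ⟨by linarith [arccos_nonneg r, pi_pos], arccos_lt_pi.2 hr⟩
  have hna : -arccos r ∈ Set.Ioo (-π) π := ⟨neg_lt_neg ha.2, by linarith [arccos_nonneg r, pi_pos]⟩
  change (1 / (2 * π)) * ∫ θ in (-arccos r)..(arccos r), discPoissonKernel r θ = _
  rw [integral_discPoissonKernel (abs_lt.2 ⟨hr, hr1⟩) hna ha, neg_div, tan_neg, mul_neg,
    arctan_neg, arctan_mul_tan_half_arccos hr hr1]
  field_simp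
  ring
end

section
/- The norm of the operator B : f ↦ (f - f(0))/z on H^∞ of the unit disc equals 2; i.e., sup over f ∈ H^∞ with ‖f‖_∞ ≤ 1 of ‖f - f(0)‖_∞ equals 2. -/
/-!
The bound `‖f z - f 0‖ ≤ ‖f z‖ + ‖f 0‖ ≤ 2` is the triangle inequality. It is nearly attained by
the disc automorphisms `z ↦ (a - z) / (1 - a z)` with real `a → 1`: they take the value `a` at `0`
and extend continuously to the boundary point `1` with value `-1`, so the supremum of
`‖f z - f 0‖` over the disc is at least `1 + a`.
-/

open Metric

theorem le_csSup_image_of_mem_closure {X α : Type*} [TopologicalSpace X] [TopologicalSpace α]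
    [ConditionallyCompleteLattice α] [ClosedIicTopology α] {g : X → α} {s : Set X} {x : X}
    (hbdd : BddAbove (g '' s)) (hx : x ∈ closure s) (hg : ContinuousWithinAt g s x) :
    g x ≤ sSup (g '' s) := by
  have hub : sSup (g '' s) ∈ upperBounds (closure (g '' s)) := by
    rw [upperBounds_closure]
    exact fun _ hy => le_csSup hbdd hy
  exact hub (hg.mem_closure_image hx)

theorem two_mem_upperBounds_image_norm_sub {X E : Type*} [SeminormedAddCommGroup E] {f : X → E}
    {s : Set X} {x₀ : X} (hx₀ : x₀ ∈ s) (hf : ∀ z ∈ s, ‖f z‖ ≤ 1) :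
    2 ∈ upperBounds ((fun z => ‖f z - f x₀‖) '' s) := by
  rintro _ ⟨z, hz, rfl⟩
  linarith [norm_sub_le (f z) (f x₀), hf z hz, hf x₀ hx₀]

/-- The automorphism of the unit disc exchanging `0` and the real point `a`. -/
noncomputable def mobius (a : ℝ) (z : ℂ) : ℂ := (a - z) / (1 - a * z)

section mobius

variable {a : ℝ}

theorem mobius_denom_ne_zero (ha : |a| < 1) {z : ℂ} (hz : ‖z‖ ≤ 1) : (1 : ℂ) - a * z ≠ 0 := by
  intro h
  have hlt : ‖(a : ℂ) * z‖ < 1 := by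
    rw [norm_mul, Complex.norm_real, Real.norm_eq_abs]
    nlinarith [abs_nonneg a, norm_nonneg z]
  rw [← sub_eq_zero.mp h, norm_one] at hlt
  exact hlt.false

theorem norm_mobius_le_one (ha : |a| < 1) {z : ℂ} (hz : ‖z‖ ≤ 1) : ‖mobius a z‖ ≤ 1 := by
  rw [mobius, norm_div, div_le_one (norm_pos_iff.mpr (mobius_denom_ne_zero ha hz)),
    Complex.norm_def, Complex.norm_def]
  apply Real.sqrt_le_sqrt
  have ha2 : a * a ≤ 1 := by nlinarith [abs_mul_abs_self a, abs_nonneg a]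
  have hz2 : z.re * z.re + z.im * z.im ≤ 1 := by
    rw [← Complex.normSq_apply, ← Complex.sq_norm]; nlinarith [norm_nonneg z]
  simp only [Complex.normSq_apply, Complex.sub_re, Complex.sub_im, Complex.mul_re,
    Complex.mul_im, Complex.ofReal_re, Complex.ofReal_im, Complex.one_re, Complex.one_im]
  -- `|1 - a z|² - |a - z|² = (1 - a²)(1 - |z|²)`
  nlinarith [mul_nonneg (sub_nonneg.mpr ha2) (sub_nonneg.mpr hz2)]

theorem differentiableOn_mobius (ha : |a| < 1) :
    DifferentiableOn ℂ (mobius a) (closedBall 0 1) := fun z hz =>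
  (DifferentiableAt.div (c := fun z : ℂ => a - z) (d := fun z : ℂ => 1 - a * z) (by fun_prop)
    (by fun_prop) (mobius_denom_ne_zero ha (mem_closedBall_zero_iff.mp hz))).differentiableWithinAt

theorem mobius_one (ha : a ≠ 1) : mobius a 1 = -1 := by
  have h : (1 : ℂ) - a ≠ 0 := by exact_mod_cast sub_ne_zero.mpr ha.symm
  rw [mobius, mul_one, ← neg_sub, neg_div, div_self h]

theorem one_add_le_csSup_image_norm_mobius_sub (ha : |a| < 1) :
    1 + a ≤ sSup ((fun z => ‖mobius a z - mobius a 0‖) '' ball 0 1) := by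
  have hbdd : BddAbove ((fun z => ‖mobius a z - mobius a 0‖) '' ball 0 1) :=
    ⟨2, two_mem_upperBounds_image_norm_sub (mem_ball_self one_pos) fun z hz =>
      norm_mobius_le_one ha (mem_closedBall_zero_iff.mp (ball_subset_closedBall hz))⟩
  have hcont : ContinuousWithinAt (fun z => ‖mobius a z - mobius a 0‖) (ball 0 1) 1 :=
    ((((differentiableOn_mobius ha).continuousOn.sub continuousOn_const).norm).continuousWithinAt
      (by simp)).mono ball_subset_closedBall
  have hmem : (1 : ℂ) ∈ closure (ball 0 1) := by simp [closure_ball (0 : ℂ) one_ne_zero]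
  have hval : ‖mobius a 1 - mobius a 0‖ = 1 + a := by
    rw [mobius_one (abs_lt.mp ha).2.ne, show mobius a 0 = a by simp [mobius], ← neg_add', norm_neg,
      ← Complex.ofReal_one, ← Complex.ofReal_add, Complex.norm_real, Real.norm_eq_abs,
      abs_of_pos (by linarith [(abs_lt.mp ha).1])]
  exact hval ▸ le_csSup_image_of_mem_closure hbdd hmem hcont

end mobius

theorem stmt_9 :
    sSup {y : ℝ | ∃ f : ℂ → ℂ, DifferentiableOn ℂ f (ball 0 1) ∧
        (∀ z ∈ ball (0:ℂ) 1, ‖f z‖ ≤ 1) ∧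
        y = sSup ((fun z => ‖f z - f 0‖) '' ball 0 1)} = 2 := by
  set S := {y : ℝ | ∃ f : ℂ → ℂ, DifferentiableOn ℂ f (ball 0 1) ∧
        (∀ z ∈ ball (0:ℂ) 1, ‖f z‖ ≤ 1) ∧
        y = sSup ((fun z => ‖f z - f 0‖) '' ball 0 1)}
  have hle : ∀ y ∈ S, y ≤ 2 := by
    rintro y ⟨f, -, hf, rfl⟩
    exact csSup_le ⟨_, Set.mem_image_of_mem _ (mem_ball_self one_pos)⟩
      (two_mem_upperBounds_image_norm_sub (mem_ball_self one_pos) hf)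
  have hmobius : ∀ a : ℝ, |a| < 1 →
      sSup ((fun z => ‖mobius a z - mobius a 0‖) '' ball 0 1) ∈ S := fun a ha =>
    ⟨mobius a, (differentiableOn_mobius ha).mono ball_subset_closedBall, fun z hz =>
      norm_mobius_le_one ha (mem_closedBall_zero_iff.mp (ball_subset_closedBall hz)), rfl⟩
  refine le_antisymm (csSup_le ⟨_, hmobius 0 (by simp)⟩ hle)
    (le_of_forall_lt_imp_le_of_dense fun c hc => ?_)
  have ha : |max (c - 1) 0| < 1 := by
    rw [abs_of_nonneg (le_max_right _ _)]; exact max_lt (by linarith) one_pos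
  calc c ≤ 1 + max (c - 1) 0 := by linarith [le_max_left (c - 1) 0]
    _ ≤ _ := one_add_le_csSup_image_norm_mobius_sub ha
    _ ≤ sSup S := le_csSup ⟨2, hle⟩ (hmobius _ ha)
end

section
/- For 0 < c ≤ π/2 and 0 < r < 1, arg((e^{2ic} - r²)/(1 - r²)) ≥ 2c. -/
/-!
Write `θ = 2c` and `t = r²`. Dividing by the positive real `1 - t` does not change the argument,
so it suffices that `z = e^{iθ} - t` has `arg z ≥ θ`. Since `Im z = sin θ ≥ 0`, both `arg z` and `θ`
lie in `[0, π]`, where `cos` is decreasing, so it is enough to show `Re z ≤ ‖z‖ cos θ`, i.e.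
`cos θ - t ≤ ‖z‖ cos θ`. This follows from `1 - t ≤ ‖z‖ ≤ 1 + t` (triangle inequality):
`(1 + cos θ)(‖z‖ - (1 - t)) + (1 - cos θ)(1 + t - ‖z‖) = 2 (‖z‖ cos θ - cos θ + t)`.
-/

open Real

namespace Complex

theorem arg_div_ofReal_of_pos (x : ℂ) {r : ℝ} (hr : 0 < r) : arg (x / r) = arg x := by
  rw [div_eq_mul_inv, ← ofReal_inv, arg_mul_real (inv_pos.2 hr)]

section UnitCircleMinusReal

variable (θ : ℝ) {t : ℝ}

theorem re_exp_ofReal_mul_I_sub_ofReal : (exp (θ * I) - t).re = Real.cos θ - t := by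
  rw [sub_re, exp_ofReal_mul_I_re, ofReal_re]

theorem im_exp_ofReal_mul_I_sub_ofReal : (exp (θ * I) - t).im = Real.sin θ := by
  rw [sub_im, exp_ofReal_mul_I_im, ofReal_im, sub_zero]

theorem one_sub_le_norm_exp_ofReal_mul_I_sub_ofReal (ht : 0 ≤ t) :
    1 - t ≤ ‖exp (θ * I) - t‖ := by
  simpa [norm_exp_ofReal_mul_I, abs_of_nonneg ht] using
    norm_sub_norm_le (exp (θ * I)) (t : ℂ)

theorem norm_exp_ofReal_mul_I_sub_ofReal_le (ht : 0 ≤ t) :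
    ‖exp (θ * I) - t‖ ≤ 1 + t := by
  simpa [norm_exp_ofReal_mul_I, abs_of_nonneg ht] using norm_sub_le (exp (θ * I)) (t : ℂ)

theorem cos_arg_exp_ofReal_mul_I_sub_ofReal_le (ht0 : 0 ≤ t) (ht1 : t < 1) :
    Real.cos (arg (exp (θ * I) - t)) ≤ Real.cos θ := by
  have hlow := one_sub_le_norm_exp_ofReal_mul_I_sub_ofReal θ ht0
  have hupp := norm_exp_ofReal_mul_I_sub_ofReal_le θ ht0
  have hpos : 0 < ‖exp (θ * I) - t‖ := by linarith
  rw [cos_arg (norm_pos_iff.1 hpos), re_exp_ofReal_mul_I_sub_ofReal, div_le_iff₀ hpos]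
  nlinarith [mul_nonneg (by linarith [neg_one_le_cos θ] : 0 ≤ 1 + Real.cos θ) (sub_nonneg.2 hlow),
    mul_nonneg (by linarith [cos_le_one θ] : 0 ≤ 1 - Real.cos θ) (sub_nonneg.2 hupp)]

theorem le_arg_exp_ofReal_mul_I_sub_ofReal {θ : ℝ} (hθ0 : 0 ≤ θ) (hθπ : θ ≤ π)
    (ht0 : 0 ≤ t) (ht1 : t < 1) : θ ≤ arg (exp (θ * I) - t) := by
  have harg0 : 0 ≤ arg (exp (θ * I) - t) := by
    rw [arg_nonneg_iff, im_exp_ofReal_mul_I_sub_ofReal]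
    exact sin_nonneg_of_nonneg_of_le_pi hθ0 hθπ
  exact (strictAntiOn_cos.le_iff_ge ⟨harg0, arg_le_pi _⟩ ⟨hθ0, hθπ⟩).1
    (cos_arg_exp_ofReal_mul_I_sub_ofReal_le θ ht0 ht1)

end UnitCircleMinusReal

end Complex

theorem stmt_17 (c r : ℝ) (hc0 : 0 < c) (hc : c ≤ Real.pi / 2)
    (hr0 : 0 < r) (hr1 : r < 1) :
    Complex.arg ((Complex.exp (2 * c * Complex.I) - (r:ℂ) ^ 2) / (1 - (r:ℂ) ^ 2)) ≥
      2 * c := by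
  have hr2 : r ^ 2 < 1 := by nlinarith
  have hcasts : (Complex.exp (2 * c * Complex.I) - (r:ℂ) ^ 2) / (1 - (r:ℂ) ^ 2) =
      (Complex.exp ((2 * c : ℝ) * Complex.I) - (r ^ 2 : ℝ)) / (1 - r ^ 2 : ℝ) := by
    push_cast; rfl
  rw [hcasts, Complex.arg_div_ofReal_of_pos _ (by linarith)]
  exact Complex.le_arg_exp_ofReal_mul_I_sub_ofReal (by linarith) (by linarith) (by positivity) hr2
end
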